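/- arXiv:2511.07984 — 9 statements merged into one kernel-verified Lean document; each statement's English description precedes it below -/
import Mathlib

section
/- For any finite set O of items and any additive valuation v: 2^O → ℝ≥0 shared by all n agents, there exists a partition (A_1,...,A_n) of O such that for all agents i, j, there exists an item o ∈ A_j with v(A_i) ≥ v(A_j \ {o}) (i.e., an EF1 allocation always exists under identical additive valuations). -/
lemma ef1_greedy_aux
    {O : Type*} [DecidableEq O]
    (n : ℕ) (hn : 0 < n) (v : O → ℝ) (hv : ∀ o, 0 ≤ v o) (S : Finset O) :
    ∃ A : Fin n → Finset O,
      (∀ o ∈ S, ∃! i : Fin n, o ∈ A i) ∧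
      (∀ o ∉ S, ∀ i, o ∉ A i) ∧
      ∀ j : Fin n, A j = ∅ ∨ ∃ o ∈ A j, ∀ i, ((A j).erase o).sum v ≤ (A i).sum v := by
  classical
  induction S using Finset.induction_on with
  | empty =>
      refine ⟨fun _ => ∅, ?_, ?_, ?_⟩
      · intro o ho; simp at ho
      · intro o _ i; simp
      · intro j; left; rfl
  | @insert a S ha ih =>
      obtain ⟨A, hpart, hout, hinv⟩ := ih
      -- pick k minimizing (A k).sum v
      obtain ⟨k, -, hk⟩ := Finset.exists_min_image (Finset.univ : Finset (Fin n))
        (fun i => (A i).sum v) ⟨⟨0, hn⟩, Finset.mem_univ _⟩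
      have hk' : ∀ i, (A k).sum v ≤ (A i).sum v := fun i => hk i (Finset.mem_univ i)
      have haA : ∀ i, a ∉ A i := hout a ha
      set A' : Fin n → Finset O := fun i => if i = k then insert a (A k) else A i with hA'
      have hsum_le : ∀ i, (A i).sum v ≤ (A' i).sum v := by
        intro i
        by_cases hik : i = k
        · subst hik
          simp only [hA', if_pos rfl]
          rw [Finset.sum_insert (haA i)]
          linarith [hv a]
        · simp [hA', hik]
      refine ⟨A', ?_, ?_, ?_⟩
      · intro o ho
        rcases Finset.mem_insert.mp ho with rfl | hoS
        · refine ⟨k, ?_, ?_⟩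
          · simp [hA']
          · intro i hi
            by_contra hik
            simp only [hA', if_neg hik] at hi
            exact haA i hi
        · obtain ⟨i, hi, hiu⟩ := hpart o hoS
          have hoa : o ≠ a := fun h => ha (h ▸ hoS)
          refine ⟨i, ?_, ?_⟩
          · by_cases hik : i = k
            · subst hik; simp [hA', Finset.mem_insert, hi]
            · simp [hA', hik, hi]
          · intro j hj
            apply hiu
            by_cases hjk : j = k
            · subst hjk
              simp only [hA', if_pos rfl, Finset.mem_insert] at hj
              rcases hj with rfl | hj
              · exact absurd rfl hoa
              · exact hj
            · simpa [hA', hjk] using hj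
      · intro o ho i
        have hoS : o ∉ S := fun h => ho (Finset.mem_insert_of_mem h)
        have hoa : o ≠ a := fun h => ho (h ▸ Finset.mem_insert_self a S)
        by_cases hik : i = k
        · subst hik
          simp only [hA', if_pos rfl, Finset.mem_insert]
          push_neg
          exact ⟨hoa, hout o hoS i⟩
        · simp only [hA', if_neg hik]
          exact hout o hoS i
      · intro j
        by_cases hjk : j = k
        · subst hjk
          right
          refine ⟨a, by simp [hA'], ?_⟩
          intro i
          have : (A' j).erase a = A j := by
            simp only [hA', if_pos rfl]
            rw [Finset.erase_insert (haA j)]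
          rw [this]
          exact (hk' i).trans (hsum_le i)
        · rcases hinv j with hje | ⟨o, ho, hle⟩
          · left; simp [hA', hjk, hje]
          · right
            refine ⟨o, by simp [hA', hjk, ho], ?_⟩
            intro i
            have : A' j = A j := by simp [hA', hjk]
            rw [this]
            exact (hle i).trans (hsum_le i)

/-- For any finite set of items and any identical additive (nonnegative) valuation shared by
all `n` agents, there exists an allocation (an `n`-partition of the items) that is EF1. -/
theorem ef1_exists_identical_valuations
    {O : Type*} [Fintype O] [DecidableEq O]
    (n : ℕ) (hn : 0 < n) (v : O → ℝ) (hv : ∀ o, 0 ≤ v o) :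
    ∃ A : Fin n → Finset O,
      (∀ o : O, ∃! i : Fin n, o ∈ A i) ∧
      ∀ i j : Fin n, A j = ∅ ∨ ∃ o ∈ A j, ((A j).erase o).sum v ≤ (A i).sum v := by
  obtain ⟨A, hpart, _, hinv⟩ := ef1_greedy_aux n hn v hv (Finset.univ : Finset O)
  refine ⟨A, fun o => hpart o (Finset.mem_univ o), fun i j => ?_⟩
  rcases hinv j with h | ⟨o, ho, hle⟩
  · exact Or.inl h
  · exact Or.inr ⟨o, ho, hle i⟩
end

section
/- Consider the greedy balanced procedure: items are processed in rounds; in each round, n items are given out, and at each step the currently unassigned item of maximum value v is given to the agent with minimum current bundle value who has not yet received an item this round. Then after every round, the resulting partial allocation (A_1,...,A_n) satisfies EF1 with respect to v: for all i, j, there is some o ∈ A_j with v(A_i) ≥ v(A_j \ {o}) (when A_j ≠ ∅). -/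
/-- Greedy balanced procedure with a common additive valuation `v`:
items are handed out in `R` rounds of `n` items each; within round `r`, the `k`-th item handed
out (values non-increasing within the round, `val r`) goes to agent `σ r k`, where agents are
served in order of minimal current bundle value (`hrule`).  Then after every round the partial
allocation is EF1 with respect to `v`: each bundle is worth at least any other bundle minus
some single item of that bundle. -/
theorem greedy_balanced_EF1
    (n R : ℕ) (hn : 0 < n)
    (val : Fin R → Fin n → ℝ) (hval : ∀ r k, 0 ≤ val r k)
    (hmono : ∀ (r : Fin R) (k k' : Fin n), k ≤ k' → val r k' ≤ val r k)
    (σ : Fin R → Equiv.Perm (Fin n))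
    (B : ℕ → Fin n → ℝ)
    (hB : ∀ (r : ℕ) (i : Fin n),
      B r i = ∑ r' ∈ Finset.univ.filter (fun r' : Fin R => (r' : ℕ) < r),
        val r' ((σ r').symm i))
    (hrule : ∀ (r : Fin R) (k k' : Fin n), k ≤ k' → B r (σ r k) ≤ B r (σ r k')) :
    ∀ r : ℕ, r ≤ R → 0 < r → ∀ i j : Fin n,
      ∃ r' : Fin R, (r' : ℕ) < r ∧ B r j - val r' ((σ r').symm j) ≤ B r i := by
  -- step lemma
  have hstep : ∀ (r : Fin R) (x : Fin n),
      B ((r : ℕ) + 1) x = B r x + val r ((σ r).symm x) := by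
    intro r x
    rw [hB, hB]
    have hset : (Finset.univ.filter (fun r' : Fin R => (r' : ℕ) < (r : ℕ) + 1))
        = insert r (Finset.univ.filter (fun r' : Fin R => (r' : ℕ) < (r : ℕ))) := by
      ext t
      simp only [Finset.mem_filter, Finset.mem_univ, true_and, Finset.mem_insert]
      constructor
      · intro h
        rcases Nat.lt_succ_iff_lt_or_eq.mp h with h | h
        · exact Or.inr h
        · exact Or.inl (Fin.ext h)
      · rintro (rfl | h)
        · exact Nat.lt_succ_self _
        · exact Nat.lt_succ_of_lt h
    rw [hset, Finset.sum_insert (by simp)]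
    ring
  have hzero : ∀ x : Fin n, B 0 x = 0 := by
    intro x; rw [hB]; simp
  -- main induction : bound for B (r+1) with witness r' ≤ r, for r < R
  have main : ∀ r : ℕ, r < R → ∀ i j : Fin n,
      ∃ r' : Fin R, (r' : ℕ) ≤ r ∧ B (r + 1) j - val r' ((σ r').symm j) ≤ B (r + 1) i := by
    intro r
    induction r with
    | zero =>
      intro hr i j
      refine ⟨⟨0, hr⟩, le_refl _, ?_⟩
      have hi := hstep ⟨0, hr⟩ i
      have hj := hstep ⟨0, hr⟩ j
      simp only [Fin.val_mk] at hi hj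
      have := hval ⟨0, hr⟩ ((σ ⟨0, hr⟩).symm i)
      rw [hi, hj, hzero, hzero]
      linarith
    | succ r ih =>
      intro hr i j
      have hrR : r < R := Nat.lt_of_succ_lt hr
      set ρ : Fin R := ⟨r + 1, hr⟩ with hρ
      have hi := hstep ρ i
      have hj := hstep ρ j
      simp only [hρ, Fin.val_mk] at hi hj
      rcases le_total ((σ ρ).symm j) ((σ ρ).symm i) with hk | hk
      · -- j served no later than i in round ρ : remove j's round-ρ item
        refine ⟨ρ, le_refl _, ?_⟩
        have hle : B (r + 1) j ≤ B (r + 1) i := by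
          have := hrule ρ _ _ hk
          simpa [hρ] using this
        have := hval ρ ((σ ρ).symm i)
        rw [hi, hj]
        linarith
      · -- i served strictly earlier (or tied): reuse previous witness
        obtain ⟨r', hr', hle⟩ := ih hrR i j
        refine ⟨r', le_trans hr' (Nat.le_succ r), ?_⟩
        have hv : val ρ ((σ ρ).symm j) ≤ val ρ ((σ ρ).symm i) := hmono ρ _ _ hk
        rw [hi, hj]
        linarith
  intro r hrR hrpos i j
  obtain ⟨s, rfl⟩ := Nat.exists_eq_add_of_lt hrpos
  simp only [Nat.zero_add] at *
  obtain ⟨r', hr', hle⟩ := main s (by omega) i j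
  exact ⟨r', by omega, hle⟩
end

section
/- Let groups G_1,...,G_k partition the n agents. Consider the weighted round-robin selection rule: at each of n steps, a group p* is chosen minimizing t_p/|G_p| (where t_p counts bundles already given to group p, ties broken toward the group that reached the minimum latest, and groups with t_p = 0 have absolute priority in order of index), and t_{p*} is incremented. Then at every point in the process, for any two groups p, q: t_p/|G_p| ≥ (t_q − 1)/|G_q|. -/
/-- Invariant of the weighted round-robin group-selection rule.  Groups `p ∈ Fin k` have sizes
`g p` (non-decreasing in `p`), summing to `n`.  At each of `n` steps one group `sel s` is
chosen: a group with counter `0` of smallest index if one exists, otherwise a group minimizing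
`t_p / g_p`.  Then at every point of the process, for any two groups `p, q`,
`t_p / g_p ≥ (t_q − 1) / g_q`, i.e. `t_p * g_q ≥ (t_q − 1) * g_p`. -/
theorem weighted_round_robin_invariant
    (k n : ℕ) (g : Fin k → ℕ) (hg : ∀ p, 0 < g p)
    (hsorted : ∀ p q : Fin k, p ≤ q → g p ≤ g q)
    (hsum : ∑ p, g p = n)
    (sel : ℕ → Fin k) (t : ℕ → Fin k → ℕ)
    (ht : ∀ s p, t s p = ((Finset.range s).filter (fun s' => sel s' = p)).card)
    (hzero : ∀ s < n, (∃ p, t s p = 0) →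
      t s (sel s) = 0 ∧ ∀ p, t s p = 0 → sel s ≤ p)
    (hmin : ∀ s < n, (∀ p, t s p ≠ 0) →
      ∀ q, t s (sel s) * g q ≤ t s q * g (sel s)) :
    ∀ s ≤ n, ∀ p q : Fin k, ((t s q : ℤ) - 1) * (g p : ℤ) ≤ (t s p : ℤ) * (g q : ℤ) := by
  have hstep : ∀ s p, t (s+1) p = t s p + if sel s = p then 1 else 0 := by
    intro s p
    rw [ht, ht, Finset.range_add_one, Finset.filter_insert]
    split
    · rw [Finset.card_insert_of_notMem (by simp)]
    · rfl
  intro s hs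
  induction s with
  | zero =>
    intro p q
    have h1 : t 0 p = 0 := by rw [ht]; simp
    have h2 : t 0 q = 0 := by rw [ht]; simp
    rw [h1, h2]
    have := hg p; have := hg q
    push_cast
    nlinarith
  | succ s ih =>
    have hs' : s < n := Nat.lt_of_succ_le hs
    have IH := ih (le_of_lt hs')
    intro p q
    rw [hstep, hstep]
    by_cases hq : sel s = q
    · by_cases hpq : p = q
      · subst hpq
        simp only [hq, if_pos]
        have := hg p
        push_cast
        nlinarith
      · have hp : ¬ (sel s = p) := fun h => hpq (h.symm.trans hq)
        rw [if_pos hq, if_neg hp]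
        have key : (t s q : ℤ) * g p ≤ (t s p : ℤ) * g q := by
          by_cases hzc : ∃ r, t s r = 0
          · have h0 := (hzero s hs' hzc).1
            rw [hq] at h0
            rw [h0]
            simp
            positivity
          · push_neg at hzc
            have := hmin s hs' hzc p
            rw [hq] at this
            exact_mod_cast this
        push_cast
        linarith
    · have hle : (t s p : ℤ) ≤ (t s p + if sel s = p then 1 else 0 : ℕ) := by
        split <;> push_cast <;> omega
      have := IH p q
      have hgq : (0:ℤ) ≤ g q := by positivity
      rw [if_neg hq]
      push_cast at hle ⊢
      nlinarith
end

section
/- In the weighted round-robin bundle assignment where bundles B^1, B^2, ... arrive in non-increasing order of value u(B^1) ≥ u(B^2) ≥ ..., and each arriving bundle is given to the group p* minimizing t_p/|G_p| (with the tie-breaking and zero-priority rules of the DM algorithm), the final assignment satisfies CGEQ1: for any two groups G_p, G_q, there exists a bundle B among those received by G_q such that u(received by G_p)/|G_p| ≥ (u(received by G_q) − u(B))/|G_q|. -/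
private lemma sum_range_mul_div (f : ℕ → ℝ) (a c : ℕ) (_hc : 0 < c) :
    ∑ m ∈ Finset.range (a * c), f (m / c) = ∑ j ∈ Finset.range a, (c : ℝ) * f j := by
  induction a with
  | zero => simp
  | succ a ih =>
    rw [Finset.sum_range_succ, ← ih, Nat.succ_mul, Finset.range_eq_Ico,
      ← Finset.sum_Ico_consecutive (fun m => f (m / c)) (Nat.zero_le (a * c))
        (Nat.le_add_right _ c), ← Finset.range_eq_Ico]
    congr 1
    have hcongr : ∀ m ∈ Finset.Ico (a * c) (a * c + c), f (m / c) = f a := by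
      intro m hm
      simp only [Finset.mem_Ico] at hm
      have : m / c = a := Nat.div_eq_of_lt_le hm.1 (by rw [Nat.succ_mul]; exact hm.2)
      rw [this]
    rw [Finset.sum_congr rfl hcongr, Finset.sum_const, Nat.card_Ico, nsmul_eq_mul]
    simp

/-- CGEQ1 of the weighted round-robin bundle assignment (Phase 2 of the DM algorithm).
`n` bundles of non-increasing nonnegative values `b 0 ≥ b 1 ≥ …` are assigned one at a time;
the bundle at step `s` goes to group `sel s`, chosen by the weighted round-robin rule (zero
counters have priority by index, otherwise minimize `t_p / g_p`), and each group `p` ends with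
exactly `g p` bundles.  Then the final assignment is CGEQ1: for any groups `p, q` there is a
bundle received by `q` such that `q`'s total minus that bundle, scaled by `g p`, is at most
`p`'s total scaled by `g q`. -/
theorem weighted_round_robin_CGEQ1
    (k n : ℕ) (g : Fin k → ℕ) (hg : ∀ p, 0 < g p)
    (hsum : ∑ p, g p = n)
    (b : ℕ → ℝ) (hb : ∀ s, 0 ≤ b s) (hbmono : ∀ s s' : ℕ, s ≤ s' → b s' ≤ b s)
    (sel : ℕ → Fin k) (t : ℕ → Fin k → ℕ)
    (ht : ∀ s p, t s p = ((Finset.range s).filter (fun s' => sel s' = p)).card)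
    (hzero : ∀ s < n, (∃ p, t s p = 0) →
      t s (sel s) = 0 ∧ ∀ p, t s p = 0 → sel s ≤ p)
    (hmin : ∀ s < n, (∀ p, t s p ≠ 0) →
      ∀ q, t s (sel s) * g q ≤ t s q * g (sel s))
    (hend : ∀ p, t n p = g p) :
    ∀ p q : Fin k, ∃ s ∈ Finset.range n, sel s = q ∧
      ((∑ s' ∈ (Finset.range n).filter (fun s' => sel s' = q), b s') - b s) * (g p : ℝ) ≤
        (∑ s' ∈ (Finset.range n).filter (fun s' => sel s' = p), b s') * (g q : ℝ) := by
  intro p q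
  -- translate the counter into Nat.count
  have hcnt : ∀ r s, t s r = Nat.count (fun s' => sel s' = r) s := by
    intro r s
    rw [ht, Nat.count_eq_card_filter_range]
  have hcn : ∀ r : Fin k, Nat.count (fun s' => sel s' = r) n = g r := by
    intro r; rw [← hcnt, hend]
  have hfin : ∀ (r : Fin k) (j : ℕ), j < g r →
      ∀ hf : (setOf (fun s' => sel s' = r)).Finite, j < hf.toFinset.card := by
    intro r j hj hf
    exact lt_of_lt_of_le (hj.trans_le (hcn r ▸ le_refl _)) (Nat.count_le_card hf n)
  set N : Fin k → ℕ → ℕ := fun r j => Nat.nth (fun s' => sel s' = r) j with hN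
  have hselN : ∀ (r : Fin k) (j : ℕ), j < g r → sel (N r j) = r := by
    intro r j hj
    exact Nat.nth_mem j (hfin r j hj)
  have hcntN : ∀ (r : Fin k) (j : ℕ), j < g r → t (N r j) r = j := by
    intro r j hj
    rw [hcnt]
    exact Nat.count_nth (hfin r j hj)
  have hNlt : ∀ (r : Fin k) (j : ℕ), j < g r → N r j < n := by
    intro r j hj
    by_contra hcon
    push_neg at hcon
    have := Nat.count_monotone (fun s' => sel s' = r) hcon
    rw [hcn r, Nat.count_nth (hfin r j hj)] at this
    omega
  have hNd : ∀ (r : Fin k) (j x : ℕ), x ≤ n → j < t x r → N r j < x := by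
    intro r j x hx hj
    have hjg : j < g r := by
      have := Nat.count_monotone (fun s' => sel s' = r) hx
      rw [hcn r, ← hcnt] at this
      omega
    by_contra hcon
    push_neg at hcon
    have := Nat.count_monotone (fun s' => sel s' = r) hcon
    rw [Nat.count_nth (hfin r j hjg), ← hcnt] at this
    omega
  -- sums over the filter equal sums over the enumeration
  have hsumEq : ∀ r : Fin k,
      ∑ s' ∈ (Finset.range n).filter (fun s' => sel s' = r), b s'
        = ∑ j ∈ Finset.range (g r), b (N r j) := by
    intro r
    refine Finset.sum_nbij' (fun s' => Nat.count (fun s'' => sel s'' = r) s') (N r) ?_ ?_ ?_ ?_ ?_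
    · intro s' hs'
      simp only [Finset.mem_filter, Finset.mem_range] at hs' ⊢
      have h1 : Nat.count (fun s'' => sel s'' = r) (s' + 1)
          = Nat.count (fun s'' => sel s'' = r) s' + 1 := by
        rw [Nat.count_succ, if_pos hs'.2]
      have h2 := Nat.count_monotone (fun s'' => sel s'' = r) (show s' + 1 ≤ n by omega)
      rw [hcn r] at h2
      omega
    · intro j hj
      simp only [Finset.mem_range] at hj
      simp only [Finset.mem_filter, Finset.mem_range]
      exact ⟨hNlt r j hj, hselN r j hj⟩
    · intro s' hs'
      simp only [Finset.mem_filter, Finset.mem_range] at hs'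
      exact Nat.nth_count (p := fun s'' => sel s'' = r) hs'.2
    · intro j hj
      simp only [Finset.mem_range] at hj
      exact Nat.count_nth (hfin r j hj)
    · intro s' hs'
      simp only [Finset.mem_filter, Finset.mem_range] at hs'
      exact congrArg b (Nat.nth_count (p := fun s'' => sel s'' = r) hs'.2).symm
  have h0q : 0 < g q := hg q
  refine ⟨N q 0, Finset.mem_range.mpr (hNlt q 0 h0q), hselN q 0 h0q, ?_⟩
  rw [hsumEq q, hsumEq p]
  obtain ⟨a, ha⟩ : ∃ a, g q = a + 1 := ⟨g q - 1, by omega⟩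
  have hsplit : ∑ j ∈ Finset.range (g q), b (N q j)
      = ∑ j ∈ Finset.range a, b (N q (j + 1)) + b (N q 0) := by
    rw [ha, Finset.sum_range_succ']
  rw [hsplit, add_sub_cancel_right]
  -- key termwise bound
  have hterm : ∀ m ∈ Finset.range (a * g p),
      b (N q (m / g p + 1)) ≤ b (N p (m / g q)) := by
    intro m hm
    rw [Finset.mem_range] at hm
    set j := m / g p + 1 with hj
    have hjlt : j < g q := by
      have : m / g p < a := (Nat.div_lt_iff_lt_mul (hg p)).mpr hm
      omega
    set s := N q j with hs
    have hsn : s < n := hNlt q j hjlt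
    have hts : t s q = j := hcntN q j hjlt
    have hselq : sel s = q := hselN q j hjlt
    have hne : ∀ r, t s r ≠ 0 := by
      intro r hr
      have h0 := (hzero s hsn ⟨r, hr⟩).1
      rw [hselq, hts, hj] at h0
      exact Nat.succ_ne_zero _ h0
    have hm2 := hmin s hsn hne p
    rw [hselq, hts] at hm2
    have hmj : m < j * g p := by
      have : m / g p < j := by omega
      exact (Nat.div_lt_iff_lt_mul (hg p)).mp this
    have hmlt : m < t s p * g q := lt_of_lt_of_le hmj hm2
    have hdiv : m / g q < t s p := (Nat.div_lt_iff_lt_mul (hg q)).mpr hmlt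
    have hNp : N p (m / g q) < s := hNd p (m / g q) s hsn.le hdiv
    exact hbmono _ _ hNp.le
  calc (∑ j ∈ Finset.range a, b (N q (j + 1))) * (g p : ℝ)
      = ∑ j ∈ Finset.range a, (g p : ℝ) * b (N q (j + 1)) := by
        rw [Finset.sum_mul]; exact Finset.sum_congr rfl fun j _ => mul_comm _ _
    _ = ∑ m ∈ Finset.range (a * g p), b (N q (m / g p + 1)) := by
        rw [sum_range_mul_div (fun j => b (N q (j + 1))) a (g p) (hg p)]
    _ ≤ ∑ m ∈ Finset.range (a * g p), b (N p (m / g q)) := Finset.sum_le_sum hterm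
    _ ≤ ∑ m ∈ Finset.range (g p * g q), b (N p (m / g q)) := by
        refine Finset.sum_le_sum_of_subset_of_nonneg ?_ ?_
        · apply Finset.range_subset_range.mpr
          have : a ≤ g q := by omega
          calc a * g p ≤ g q * g p := Nat.mul_le_mul_right _ this
            _ = g p * g q := Nat.mul_comm _ _
        · intro m _ _; exact hb _
    _ = ∑ i ∈ Finset.range (g p), (g q : ℝ) * b (N p i) :=
        sum_range_mul_div (fun i => b (N p i)) (g p) (g q) (hg q)
    _ = (∑ i ∈ Finset.range (g p), b (N p i)) * (g q : ℝ) := by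
        rw [Finset.sum_mul]; exact Finset.sum_congr rfl fun i _ => mul_comm _ _
end

section
/- Let |G_p| ≤ |G_q| be two group sizes and suppose nonnegative integers f_0, f_1, ..., f_{|G_p|} satisfy Σ_{i=0}^{|G_p|} f_i = |G_q|, and for every k with 1 ≤ k ≤ |G_p|, the inequality (Σ_{i=0}^{k-1} f_i)·|G_p| ≤ (k−1)·|G_q| + |G_p| holds. Let bundles received by G_p have values a_1 ≥ a_2 ≥ ... ≥ a_{|G_p|} and bundles received by G_q have values b_1 ≥ b_2 ≥ ... ≥ b_{|G_q|}, interleaved so that a_k exceeds or equals the value of every bundle received by G_q after a_k's allocation. If additionally a_k ≥ b_j whenever b_j is allocated after a_k, then |G_q|·Σ_k a_k ≥ |G_p|·(Σ_j b_j − max_j b_j). -/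
private lemma dm_tele_aux (u : ℕ → ℝ) (m n : ℕ) (h : m ≤ n) :
    ∑ K ∈ Finset.Ico m n, (u K - u (K + 1)) = u m - u n := by
  induction n, h using Nat.le_induction with
  | base => simp
  | succ n hmn ih =>
    rw [Finset.sum_Ico_succ_top hmn, ih]
    ring

/-- The key counting lemma of the DM algorithm analysis.  Two groups of sizes `gp ≤ gq`
receive bundles alternately from a common non-increasing sequence: `G_p` receives bundles of
values `a 0 ≥ a 1 ≥ …` and `G_q` bundles of values `b 0 ≥ b 1 ≥ …` (both nonnegative);
`f i` counts the bundles `G_q` receives between `G_p`'s `i`-th and `(i+1)`-th bundle, with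
`∑ f = gq` and the quota inequality `(∑_{i<k} f i) * gp ≤ (k−1) * gq + gp` for `1 ≤ k ≤ gp`;
any bundle of `G_q` allocated after `G_p`'s `k`-th bundle has value at most `a k`.
Then `gq * Σ a ≥ gp * (Σ b − max b)`. -/
theorem dm_counting_lemma
    (gp gq : ℕ) (hgp : 0 < gp) (hgq : 0 < gq) (hle : gp ≤ gq)
    (f : ℕ → ℕ) (hf : ∑ i ∈ Finset.range (gp + 1), f i = gq)
    (hquota : ∀ k, 1 ≤ k → k ≤ gp →
      (∑ i ∈ Finset.range k, f i) * gp ≤ (k - 1) * gq + gp)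
    (a : Fin gp → ℝ) (b : Fin gq → ℝ)
    (ha : ∀ k, 0 ≤ a k) (hb : ∀ j, 0 ≤ b j)
    (hamono : ∀ k k' : Fin gp, k ≤ k' → a k' ≤ a k)
    (hbmono : ∀ j j' : Fin gq, j ≤ j' → b j' ≤ b j)
    (hinter : ∀ (k : Fin gp) (j : Fin gq),
      (∑ i ∈ Finset.range ((k : ℕ) + 1), f i) ≤ (j : ℕ) → b j ≤ a k) :
    (gp : ℝ) * ((∑ j, b j) -
        Finset.univ.sup' (Finset.univ_nonempty_iff.mpr (Fin.pos_iff_nonempty.mp hgq)) b)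
      ≤ (gq : ℝ) * ∑ k, a k := by
  classical
  -- extended sequences
  set a' : ℕ → ℝ := fun k => if h : k < gp then a ⟨k, h⟩ else 0 with ha'
  set b' : ℕ → ℝ := fun j => if h : j < gq then b ⟨j, h⟩ else 0 with hb'
  set S : ℕ → ℕ := fun k => ∑ i ∈ Finset.range k, f i with hS
  have hSmono : Monotone S := fun m n h =>
    Finset.sum_le_sum_of_subset (Finset.range_subset_range.2 h)
  have hf0 : f 0 ≤ 1 := by
    have h := hquota 1 le_rfl hgp
    simp only [Finset.sum_range_one] at h
    have : f 0 * gp ≤ 1 * gp := by simpa using h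
    exact Nat.le_of_mul_le_mul_right this hgp
  set κ : ℕ → ℕ := fun j => Nat.findGreatest (fun k => S (k + 1) ≤ j) (gp - 1) with hκ
  have hκlt : ∀ j, κ j < gp := fun j =>
    lt_of_le_of_lt (Nat.findGreatest_le _) (Nat.sub_lt hgp one_pos)
  have hκspec : ∀ j, 1 ≤ j → S (κ j + 1) ≤ j := by
    intro j hj
    exact Nat.findGreatest_spec (P := fun k => S (k + 1) ≤ j) (Nat.zero_le _)
      (show S 1 ≤ j by
        have : S 1 = f 0 := by simp [hS]
        omega)
  have hκlower : ∀ j K, K + 2 ≤ gp → S (K + 2) ≤ j → K + 1 ≤ κ j := by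
    intro j K hK hj
    exact Nat.le_findGreatest (by omega) hj
  -- dominance of a over the later b's
  have hba : ∀ j ∈ Finset.Ico 1 gq, b' j ≤ a' (κ j) := by
    intro j hj
    rw [Finset.mem_Ico] at hj
    have h1 := hκspec j hj.1
    have h2 := hκlt j
    simp only [hb', ha', dif_pos hj.2, dif_pos h2]
    exact hinter ⟨κ j, h2⟩ ⟨j, hj.2⟩ h1
  -- layer decomposition
  set g : ℕ → ℝ := fun K => a' K - a' (K + 1) with hg
  have hgnonneg : ∀ K, K < gp → 0 ≤ g K := by
    intro K hK
    simp only [hg, ha', sub_nonneg, dif_pos hK]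
    by_cases h : K + 1 < gp
    · rw [dif_pos h]; exact hamono ⟨K, hK⟩ ⟨K + 1, h⟩ (by simp [Fin.le_def])
    · rw [dif_neg h]; exact ha _
  have htel : ∀ k, k ≤ gp → ∑ K ∈ Finset.Ico k gp, g K = a' k := by
    intro k hk
    have h0 : a' gp = 0 := by simp [ha']
    simp only [hg]
    rw [dm_tele_aux a' k gp hk, h0, sub_zero]
  -- the counting bound
  have hcard : ∀ K, K < gp →
      gp * ((Finset.Ico 1 gq).filter (fun j => κ j ≤ K)).card ≤ (K + 1) * gq := by
    intro K hK
    by_cases hK2 : K + 2 ≤ gp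
    · have hsub : (Finset.Ico 1 gq).filter (fun j => κ j ≤ K) ⊆ Finset.Ico 1 (S (K + 2)) := by
        intro j hj
        rw [Finset.mem_filter, Finset.mem_Ico] at hj
        rw [Finset.mem_Ico]
        refine ⟨hj.1.1, ?_⟩
        by_contra h
        push_neg at h
        have := hκlower j K hK2 h
        omega
      have h1 : ((Finset.Ico 1 gq).filter (fun j => κ j ≤ K)).card ≤ S (K + 2) - 1 := by
        calc ((Finset.Ico 1 gq).filter (fun j => κ j ≤ K)).card
            ≤ (Finset.Ico 1 (S (K + 2))).card := Finset.card_le_card hsub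
          _ = S (K + 2) - 1 := Nat.card_Ico 1 _
      have h2 : S (K + 2) * gp ≤ (K + 1) * gq + gp := by
        have := hquota (K + 2) (by omega) hK2
        simpa [hS] using this
      rcases Nat.eq_zero_or_pos (S (K + 2)) with h0 | h0
      · have hc0 : ((Finset.Ico 1 gq).filter (fun j => κ j ≤ K)).card = 0 := by omega
        simp [hc0]
      · have hc1 : ((Finset.Ico 1 gq).filter (fun j => κ j ≤ K)).card + 1 ≤ S (K + 2) := by
          omega
        have h3 : gp * (((Finset.Ico 1 gq).filter (fun j => κ j ≤ K)).card + 1)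
            ≤ (K + 1) * gq + gp :=
          le_trans (Nat.mul_le_mul_left _ hc1) (by rw [mul_comm]; exact h2)
        rw [Nat.mul_add, Nat.mul_one] at h3
        exact Nat.le_of_add_le_add_right h3
    · have hc : ((Finset.Ico 1 gq).filter (fun j => κ j ≤ K)).card ≤ gq := by
        refine le_trans (Finset.card_le_card (Finset.filter_subset _ _)) ?_
        rw [Nat.card_Ico]; omega
      have hKeq : K + 1 = gp := by omega
      rw [hKeq]
      exact Nat.mul_le_mul_left _ hc
  -- the main chain of (in)equalities
  have key : (gp : ℝ) * ∑ j ∈ Finset.Ico 1 gq, b' j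
      ≤ (gq : ℝ) * ∑ k ∈ Finset.range gp, a' k := by
    calc (gp : ℝ) * ∑ j ∈ Finset.Ico 1 gq, b' j
        ≤ (gp : ℝ) * ∑ j ∈ Finset.Ico 1 gq, a' (κ j) :=
          mul_le_mul_of_nonneg_left (Finset.sum_le_sum hba) (by positivity)
      _ = (gp : ℝ) * ∑ j ∈ Finset.Ico 1 gq, ∑ K ∈ Finset.range gp,
            (if κ j ≤ K then g K else 0) := by
          congr 1
          refine Finset.sum_congr rfl fun j hj => ?_
          rw [← htel (κ j) (le_of_lt (hκlt j)), ← Finset.sum_filter]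
          congr 1
          ext K
          simp only [Finset.mem_filter, Finset.mem_range, Finset.mem_Ico]
          omega
      _ = (gp : ℝ) * ∑ K ∈ Finset.range gp,
            (((Finset.Ico 1 gq).filter (fun j => κ j ≤ K)).card : ℝ) * g K := by
          rw [Finset.sum_comm]
          congr 1
          refine Finset.sum_congr rfl fun K hK => ?_
          rw [← Finset.sum_filter, Finset.sum_const, nsmul_eq_mul]
      _ = ∑ K ∈ Finset.range gp,
            ((gp * ((Finset.Ico 1 gq).filter (fun j => κ j ≤ K)).card : ℕ) : ℝ) * g K := by
          rw [Finset.mul_sum]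
          refine Finset.sum_congr rfl fun K hK => ?_
          push_cast
          ring
      _ ≤ ∑ K ∈ Finset.range gp, (((K + 1) * gq : ℕ) : ℝ) * g K := by
          refine Finset.sum_le_sum fun K hK => ?_
          refine mul_le_mul_of_nonneg_right ?_ (hgnonneg K (Finset.mem_range.1 hK))
          exact_mod_cast hcard K (Finset.mem_range.1 hK)
      _ = (gq : ℝ) * ∑ K ∈ Finset.range gp, ((K : ℝ) + 1) * g K := by
          rw [Finset.mul_sum]
          refine Finset.sum_congr rfl fun K hK => ?_
          push_cast
          ring
      _ = (gq : ℝ) * ∑ k ∈ Finset.range gp, a' k := by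
          congr 1
          have hstep : ∀ K ∈ Finset.range gp,
              ((K : ℝ) + 1) * g K = ∑ k ∈ Finset.range gp, (if k ≤ K then g K else 0) := by
            intro K hK
            rw [Finset.mem_range] at hK
            rw [← Finset.sum_filter]
            have hfe : (Finset.range gp).filter (fun k => k ≤ K) = Finset.range (K + 1) := by
              ext k
              simp only [Finset.mem_filter, Finset.mem_range]
              omega
            rw [hfe, Finset.sum_const, Finset.card_range, nsmul_eq_mul]
            push_cast
            ring
          rw [Finset.sum_congr rfl hstep, Finset.sum_comm]
          refine Finset.sum_congr rfl fun k hk => ?_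
          rw [Finset.mem_range] at hk
          rw [← htel k (le_of_lt hk), ← Finset.sum_filter]
          congr 1
          ext K
          simp only [Finset.mem_filter, Finset.mem_range, Finset.mem_Ico]
          omega
  -- reassembling the statement
  have hsup : Finset.univ.sup'
      (Finset.univ_nonempty_iff.mpr (Fin.pos_iff_nonempty.mp hgq)) b = b ⟨0, hgq⟩ := by
    refine le_antisymm ?_ (Finset.le_sup' b (Finset.mem_univ _))
    exact Finset.sup'_le _ _ fun j _ => hbmono ⟨0, hgq⟩ j (by simp [Fin.le_def])
  have hbsum : ∑ j, b j = b' 0 + ∑ j ∈ Finset.Ico 1 gq, b' j := by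
    have h1 : ∑ j, b j = ∑ j ∈ Finset.range gq, b' j := by
      rw [← Fin.sum_univ_eq_sum_range b' gq]
      refine Finset.sum_congr rfl fun j _ => ?_
      simp [hb', j.isLt]
    rw [h1, Finset.range_eq_Ico, Finset.sum_eq_sum_Ico_succ_bot hgq]
  have hasum : ∑ k, a k = ∑ k ∈ Finset.range gp, a' k := by
    rw [← Fin.sum_univ_eq_sum_range a' gp]
    refine Finset.sum_congr rfl fun k _ => ?_
    simp [ha', k.isLt]
  have hb0 : b' 0 = b ⟨0, hgq⟩ := by simp [hb', hgq]
  rw [hsup, hbsum, hb0, add_sub_cancel_left, hasum]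
  exact key
end

section
/- For any fair division instance in which all agents and the centralized allocator rank the items identically (ordered valuations: v_i(o_1) ≥ ... ≥ v_i(o_m) for all i, and u(o_1) ≥ ... ≥ u(o_m)), there exists an allocation that is simultaneously EF1 for the agents and CGEQ1 for the groups under u. -/
/-- extension of a tuple on `Fin m` to `ℕ` by zero -/
noncomputable def xext {m : ℕ} (x : Fin m → ℝ) (t : ℕ) : ℝ :=
  if h : t < m then x ⟨t, h⟩ else 0

lemma abel_sum {m : ℕ} (x : Fin m → ℝ) (S : Finset (Fin m)) :
    S.sum x = ∑ t ∈ Finset.range m,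
      (xext x t - xext x (t+1)) * ((S.filter (fun o => o.val ≤ t)).card : ℝ) := by
  have key : ∀ o : Fin m, x o
      = ∑ t ∈ Finset.range m, (if o.val ≤ t then (xext x t - xext x (t+1)) else 0) := by
    intro o
    rw [← Finset.sum_filter]
    have hfil : (Finset.range m).filter (fun t => o.val ≤ t) = Finset.Ico o.val m := by
      ext t; simp [Finset.mem_Ico, And.comm]
    rw [hfil, Finset.sum_Ico_eq_sum_range]
    have h1 := Finset.sum_range_sub' (fun i => xext x (o.val + i)) (m - o.val)
    simp only [add_zero] at h1
    have h2 : ∀ k, o.val + k + 1 = o.val + (k + 1) := fun k => by ring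
    calc x o = xext x o.val - xext x (o.val + (m - o.val)) := by
              rw [Nat.add_sub_cancel' o.isLt.le]
              simp [xext, o.isLt]
      _ = ∑ k ∈ Finset.range (m - o.val), (xext x (o.val + k) - xext x (o.val + k + 1)) := by
              rw [← h1]; exact Finset.sum_congr rfl fun k _ => by rw [h2]
  calc S.sum x = ∑ o ∈ S, ∑ t ∈ Finset.range m,
        (if o.val ≤ t then (xext x t - xext x (t+1)) else 0) :=
          Finset.sum_congr rfl fun o _ => key o
    _ = ∑ t ∈ Finset.range m, ∑ o ∈ S,
        (if o.val ≤ t then (xext x t - xext x (t+1)) else 0) := Finset.sum_comm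
    _ = _ := by
          refine Finset.sum_congr rfl fun t _ => ?_
          rw [← Finset.sum_filter, Finset.sum_const, nsmul_eq_mul, mul_comm]

lemma dominance {m : ℕ} (x : Fin m → ℝ) (hx0 : ∀ o, 0 ≤ x o)
    (hxd : ∀ o o' : Fin m, o ≤ o' → x o' ≤ x o) (a b : ℕ) (T S : Finset (Fin m))
    (h : ∀ t, t < m →
      a * ((T.filter (fun o => o.val ≤ t)).card) ≤ b * ((S.filter (fun o => o.val ≤ t)).card)) :
    (a : ℝ) * T.sum x ≤ (b : ℝ) * S.sum x := by
  rw [abel_sum x T, abel_sum x S, Finset.mul_sum, Finset.mul_sum]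
  refine Finset.sum_le_sum fun t ht => ?_
  have htm : t < m := Finset.mem_range.mp ht
  have hd : 0 ≤ xext x t - xext x (t+1) := by
    unfold xext
    rw [dif_pos htm]
    split_ifs with h2
    · exact sub_nonneg.mpr (hxd _ _ (by exact_mod_cast Nat.le_succ t))
    · simpa using hx0 ⟨t, htm⟩
  have hc : (a : ℝ) * ((T.filter (fun o => o.val ≤ t)).card : ℝ)
      ≤ (b : ℝ) * ((S.filter (fun o => o.val ≤ t)).card : ℝ) := by
    exact_mod_cast h t htm
  nlinarith [hc, hd, mul_le_mul_of_nonneg_left hc hd]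

lemma window_sum (n : ℕ) (hn : 0 < n) (g : ℕ → ℕ) (hg : ∀ s, g (s + n) = g s) (a : ℕ) :
    ∑ o ∈ Finset.Ico a (a+n), g o = ∑ s ∈ Finset.range n, g s := by
  induction a with
  | zero =>
    rw [Finset.range_eq_Ico]
    norm_num
  | succ a ih =>
    have h1 : a + 1 ≤ a + n := by omega
    have h2 : a < a + n := by omega
    have e1 : a + 1 + n = (a + n) + 1 := by ring
    rw [e1, Finset.sum_Ico_succ_top h1, hg a, ← ih,
      Finset.sum_eq_sum_Ico_succ_bot h2]
    ring

lemma periodic_sum (n : ℕ) (hn : 0 < n) (g : ℕ → ℕ) (hg : ∀ s, g (s + n) = g s) (t : ℕ) :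
    ∑ o ∈ Finset.range t, g o
      = (t / n) * (∑ s ∈ Finset.range n, g s) + ∑ s ∈ Finset.range (t % n), g s := by
  have main : ∀ q r, ∑ o ∈ Finset.range (q * n + r), g o
      = q * (∑ s ∈ Finset.range n, g s) + ∑ s ∈ Finset.range r, g s := by
    intro q
    induction q with
    | zero => intro r; simp
    | succ q ih =>
      intro r
      have e1 : (q + 1) * n + r = (q * n + r) + n := by ring
      have e2 : ∑ o ∈ Finset.range ((q * n + r) + n), g o
          = ∑ o ∈ Finset.range (q * n + r), g o + ∑ o ∈ Finset.Ico (q*n+r) ((q*n+r)+n), g o := by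
        rw [Finset.range_eq_Ico, Finset.range_eq_Ico]
        exact (Finset.sum_Ico_consecutive g (Nat.zero_le (q*n+r)) (by omega : q*n+r ≤ q*n+r+n)).symm
      rw [e1, e2, window_sum n hn g hg, ih]
      ring
  have := main (t / n) (t % n)
  rwa [Nat.div_add_mod' t n] at this

/-- For any instance with ordered valuations (all agents and the allocator rank the `m` items
identically, here: values non-increasing in the item index), there exists an allocation that is
simultaneously EF1 for the agents (w.r.t. their valuations `v i`) and CGEQ1 for the groups
(w.r.t. the allocator's valuation `u`). -/
theorem ordered_valuations_EF1_CGEQ1_exists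
    (n m k : ℕ) (hn : 0 < n)
    (G : Fin n → Fin k) (hG : ∀ p, ∃ i, G i = p)
    (v : Fin n → Fin m → ℝ) (u : Fin m → ℝ)
    (hv : ∀ i o, 0 ≤ v i o) (hu : ∀ o, 0 ≤ u o)
    (hvord : ∀ i, ∀ o o' : Fin m, o ≤ o' → v i o' ≤ v i o)
    (huord : ∀ o o' : Fin m, o ≤ o' → u o' ≤ u o) :
    ∃ A : Fin n → Finset (Fin m),
      (∀ o : Fin m, ∃! i : Fin n, o ∈ A i) ∧
      (∀ i j : Fin n, A j = ∅ ∨ ∃ o ∈ A j,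
        ((A j).erase o).sum (v i) ≤ (A i).sum (v i)) ∧
      (∀ p q : Fin k,
        (Finset.univ.filter fun j => G j = q).biUnion A = ∅ ∨
        ∃ o ∈ (Finset.univ.filter fun j => G j = q).biUnion A,
          (((Finset.univ.filter fun j => G j = q).biUnion A).erase o).sum u /
              ((Finset.univ.filter fun j => G j = q).card : ℝ) ≤
            ((Finset.univ.filter fun i => G i = p).biUnion A).sum u /
              ((Finset.univ.filter fun i => G i = p).card : ℝ)) := by
  classical
  -- group sizes
  set c : Fin k → ℕ := fun p => (Finset.univ.filter fun j => G j = p).card with hc_def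
  have hc : ∀ p, 0 < c p := by
    intro p
    obtain ⟨i, hi⟩ := hG p
    exact Finset.card_pos.mpr ⟨i, by simp [hi]⟩
  -- rank within group
  set rank : Fin n → ℕ :=
    fun i => (Finset.univ.filter fun j => G j = G i ∧ j < i).card with hrank_def
  have rank_lt : ∀ i, rank i < c (G i) := by
    intro i
    apply Finset.card_lt_card
    constructor
    · intro j hj
      simp only [Finset.mem_filter] at hj ⊢
      exact ⟨Finset.mem_univ _, hj.2.1⟩
    · intro hsub
      have : i ∈ Finset.univ.filter fun j => G j = G i := by simp
      have := hsub this
      simp at this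
  have rank_mono : ∀ i j, G i = G j → i < j → rank i < rank j := by
    intro i j hG' hij
    apply Finset.card_lt_card
    constructor
    · intro a ha
      simp only [Finset.mem_filter] at ha ⊢
      exact ⟨Finset.mem_univ _, ha.2.1.trans hG', ha.2.2.trans hij⟩
    · intro hsub
      have : i ∈ Finset.univ.filter fun a => G a = G j ∧ a < j := by
        simp [hG', hij]
      have := hsub this
      simp only [Finset.mem_filter] at this
      exact lt_irrefl i this.2.2
  have rank_inj : ∀ i j, G i = G j → rank i = rank j → i = j := by
    intro i j hG' hr
    rcases lt_trichotomy i j with h | h | h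
    · exact absurd hr (Nat.ne_of_lt (rank_mono i j hG' h))
    · exact h
    · exact absurd hr.symm (Nat.ne_of_lt (rank_mono j i hG'.symm h))
  -- sorting by key
  set key : Fin n → ℚ := fun i => (rank i : ℚ) / (c (G i) : ℚ) with hkey_def
  set σ : Equiv.Perm (Fin n) := Tuple.sort key with hσ_def
  have hmono : Monotone (key ∘ ⇑σ) := Tuple.monotone_sort key
  -- the picking function
  set h : ℕ → Fin n := fun s => σ ⟨s % n, Nat.mod_lt s hn⟩ with hh_def
  have h_per : ∀ s, h (s + n) = h s := by
    intro s
    simp only [hh_def]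
    congr 1
    ext
    simp [Nat.add_mod_right]
  have h_small : ∀ (s : ℕ) (hs : s < n), h s = σ ⟨s, hs⟩ := by
    intro s hs
    simp only [hh_def]
    congr 1
    ext
    simp [Nat.mod_eq_of_lt hs]
  set A : Fin n → Finset (Fin m) :=
    fun i => Finset.univ.filter fun o => h o.val = i with hA_def
  -- counts
  have cnt_partial : ∀ (i : Fin n) (r : ℕ), r ≤ n →
      ((Finset.range r).filter fun s => h s = i).card
        = if ((σ.symm i : Fin n) : ℕ) < r then 1 else 0 := by
    intro i r hr
    have : ((Finset.range r).filter fun s => h s = i)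
        = if ((σ.symm i : Fin n) : ℕ) < r then {((σ.symm i : Fin n) : ℕ)} else ∅ := by
      ext s
      simp only [Finset.mem_filter, Finset.mem_range]
      constructor
      · rintro ⟨hs, hhs⟩
        have hsn : s < n := lt_of_lt_of_le hs hr
        rw [h_small s hsn] at hhs
        have : (⟨s, hsn⟩ : Fin n) = σ.symm i := by
          apply_fun σ.symm at hhs
          simpa using hhs
        have hs' : s = ((σ.symm i : Fin n) : ℕ) := by
          rw [← this]
        rw [if_pos (hs' ▸ hs)]
        simp [hs']
      · intro hmem
        split_ifs at hmem with hcond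
        · simp only [Finset.mem_singleton] at hmem
          subst hmem
          refine ⟨hcond, ?_⟩
          rw [h_small _ (Fin.is_lt _)]
          simp
        · simp at hmem
    rw [this]
    split_ifs <;> simp
  have cnt_formula : ∀ (i : Fin n) (T : ℕ),
      ((Finset.range T).filter fun s => h s = i).card
        = T / n + (if ((σ.symm i : Fin n) : ℕ) < T % n then 1 else 0) := by
    intro i T
    rw [Finset.card_filter]
    rw [periodic_sum n hn _ (fun s => by rw [h_per s]) T]
    rw [← Finset.card_filter, ← Finset.card_filter]
    rw [cnt_partial i n le_rfl, cnt_partial i (T % n) (Nat.mod_lt T hn).le]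
    rw [if_pos (Fin.is_lt _)]
    ring
  -- group counts
  set Spart : Fin k → ℕ → ℕ :=
    fun p r => ((Finset.range r).filter fun s => G (h s) = p).card with hSpart_def
  have Spart_bridge : ∀ (p : Fin k) (r : ℕ), r ≤ n →
      Spart p r = (Finset.univ.filter fun a =>
        G a = p ∧ ((σ.symm a : Fin n) : ℕ) < r).card := by
    intro p r hr
    apply Finset.card_bij (fun s hs => h s)
    · intro s hs
      simp only [Finset.mem_filter, Finset.mem_range] at hs
      have hsn : s < n := lt_of_lt_of_le hs.1 hr
      simp only [Finset.mem_filter]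
      refine ⟨Finset.mem_univ _, hs.2, ?_⟩
      rw [h_small s hsn]
      simpa using hs.1
    · intro s1 hs1 s2 hs2 heq
      simp only [Finset.mem_filter, Finset.mem_range] at hs1 hs2
      have h1 : s1 < n := lt_of_lt_of_le hs1.1 hr
      have h2 : s2 < n := lt_of_lt_of_le hs2.1 hr
      rw [h_small s1 h1, h_small s2 h2] at heq
      have := σ.injective heq
      exact Fin.mk.inj_iff.mp this
    · intro a ha
      simp only [Finset.mem_filter] at ha
      refine ⟨((σ.symm a : Fin n) : ℕ), ?_, ?_⟩
      · simp only [Finset.mem_filter, Finset.mem_range]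
        refine ⟨ha.2.2, ?_⟩
        rw [h_small _ (Fin.is_lt _)]
        simpa using ha.2.1
      · rw [h_small _ (Fin.is_lt _)]
        simp
  have Spart_window : ∀ p : Fin k, Spart p n = c p := by
    intro p
    rw [Spart_bridge p n le_rfl, hc_def]
    congr 1
    ext a
    simp [Fin.is_lt]
  have gcnt_formula : ∀ (p : Fin k) (T : ℕ),
      ((Finset.range T).filter fun s => G (h s) = p).card
        = T / n * c p + Spart p (T % n) := by
    intro p T
    rw [Finset.card_filter]
    rw [periodic_sum n hn _ (fun s => by rw [h_per s]) T]
    rw [← Finset.card_filter, ← Finset.card_filter]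
    rw [show ((Finset.range n).filter fun s => G (h s) = p).card = Spart p n from rfl,
      Spart_window]
  -- the key scheduling inequality
  have key_ineq : ∀ (r : ℕ), r < n → ∀ p q : Fin k,
      c p * Spart q r ≤ c q * Spart p r + c p := by
    intro r hr p q
    have hbq := Spart_bridge q r hr.le
    have hbp := Spart_bridge p r hr.le
    set E : Finset (Fin n) :=
      Finset.univ.filter (fun a => G a = q ∧ ((σ.symm a : Fin n) : ℕ) < r) with hE_def
    set Ep : Finset (Fin n) :=
      Finset.univ.filter (fun a => G a = p ∧ ((σ.symm a : Fin n) : ℕ) < r) with hEp_def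
    have hsq_le : Spart q r ≤ c q := by
      rw [hbq, hc_def]
      apply Finset.card_le_card
      intro a ha
      simp only [hE_def, Finset.mem_filter] at ha
      simp only [Finset.mem_filter]
      exact ⟨Finset.mem_univ _, ha.2.1⟩
    by_cases hsq0 : Spart q r = 0
    · simp [hsq0]
    by_cases hsp_big : c p ≤ Spart p r
    · calc c p * Spart q r ≤ c p * c q := Nat.mul_le_mul_left _ hsq_le
        _ ≤ c q * Spart p r := by
            rw [mul_comm]
            exact Nat.mul_le_mul_left _ hsp_big
        _ ≤ c q * Spart p r + c p := Nat.le_add_right _ _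
    push_neg at hsp_big
    -- find executed agent of group q with large rank
    have hEcard : E.card = Spart q r := hbq.symm
    obtain ⟨a, haE, hrank_a⟩ : ∃ a ∈ E, Spart q r ≤ rank a + 1 := by
      by_contra hcon
      push_neg at hcon
      have himg : E.image rank ⊆ Finset.range (Spart q r - 1) := by
        intro x hx
        simp only [Finset.mem_image] at hx
        obtain ⟨a, ha, rfl⟩ := hx
        have := hcon a ha
        simp only [Finset.mem_range]
        omega
      have hinj : Set.InjOn rank E := by
        intro x hx y hy hxy
        simp only [hE_def, Finset.coe_filter, Set.mem_setOf_eq] at hx hy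
        exact rank_inj x y (hx.2.1.trans hy.2.1.symm) hxy
      have h1 : E.card ≤ (Finset.range (Spart q r - 1)).card :=
        le_trans (le_of_eq (Finset.card_image_of_injOn hinj).symm)
          (Finset.card_le_card himg)
      rw [Finset.card_range, hEcard] at h1
      omega
    -- find pending agent of group p with small rank
    have hEpcard : Ep.card = Spart p r := hbp.symm
    have hPend : (Finset.univ.filter (fun b : Fin n =>
        G b = p ∧ ¬ ((σ.symm b : Fin n) : ℕ) < r)).card = c p - Spart p r := by
      have := Finset.card_filter_add_card_filter_not
        (s := Finset.univ.filter (fun b : Fin n => G b = p))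
        (fun b => ((σ.symm b : Fin n) : ℕ) < r)
      rw [Finset.filter_filter, Finset.filter_filter] at this
      have e1 : (Finset.univ.filter (fun b : Fin n =>
          G b = p ∧ ((σ.symm b : Fin n) : ℕ) < r)).card = Spart p r := hEpcard
      rw [e1] at this
      simp only [hc_def]
      omega
    obtain ⟨b, hbPend, hrank_b⟩ : ∃ b, (G b = p ∧ ¬ ((σ.symm b : Fin n) : ℕ) < r)
        ∧ rank b ≤ Spart p r := by
      by_contra hcon
      push_neg at hcon
      set Pend := Finset.univ.filter (fun b : Fin n =>
        G b = p ∧ ¬ ((σ.symm b : Fin n) : ℕ) < r) with hPend_def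
      have himg : Pend.image rank ⊆ Finset.Ico (Spart p r + 1) (c p) := by
        intro x hx
        simp only [Finset.mem_image] at hx
        obtain ⟨b, hb, rfl⟩ := hx
        simp only [hPend_def, Finset.mem_filter] at hb
        have h1 : Spart p r < rank b := hcon b ⟨hb.2.1, not_lt.mp hb.2.2⟩
        have h2 := rank_lt b
        rw [hb.2.1] at h2
        simp only [Finset.mem_Ico]
        omega
      have hinj : Set.InjOn rank Pend := by
        intro x hx y hy hxy
        simp only [hPend_def, Finset.coe_filter, Set.mem_setOf_eq] at hx hy
        exact rank_inj x y (hx.2.1.trans hy.2.1.symm) hxy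
      have h1 : Pend.card ≤ (Finset.Ico (Spart p r + 1) (c p)).card :=
        le_trans (le_of_eq (Finset.card_image_of_injOn hinj).symm)
          (Finset.card_le_card himg)
      rw [Nat.card_Ico, hPend] at h1
      omega
    -- compare keys
    simp only [hE_def, Finset.mem_filter] at haE
    have hpos : (σ.symm a : Fin n) ≤ (σ.symm b : Fin n) := by
      have h1 : ((σ.symm a : Fin n) : ℕ) < r := haE.2.2
      have h2 : ¬ ((σ.symm b : Fin n) : ℕ) < r := hbPend.2
      exact Fin.le_def.mpr (by omega)
    have hkey : key a ≤ key b := by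
      have := hmono hpos
      simpa using this
    have hGa : G a = q := haE.2.1
    have hGb : G b = p := hbPend.1
    rw [hkey_def] at hkey
    simp only [hGa, hGb] at hkey
    have hcq : (0:ℚ) < (c q : ℚ) := by exact_mod_cast hc q
    have hcp : (0:ℚ) < (c p : ℚ) := by exact_mod_cast hc p
    rw [div_le_div_iff₀ hcq hcp] at hkey
    have hkey' : rank a * c p ≤ rank b * c q := by exact_mod_cast hkey
    calc c p * Spart q r ≤ c p * (rank a + 1) := Nat.mul_le_mul_left _ hrank_a
      _ = rank a * c p + c p := by ring
      _ ≤ rank b * c q + c p := by omega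
      _ ≤ Spart p r * c q + c p := by
          have := Nat.mul_le_mul_right (c q) hrank_b
          omega
      _ = c q * Spart p r + c p := by ring
  -- bridges from Fin m prefix filters to range filters
  have bridge : ∀ (P : Fin n → Prop) [DecidablePred P] (t : ℕ), t < m →
      ((Finset.univ.filter fun o : Fin m => P (h o.val)).filter
          fun o => o.val ≤ t).card
        = ((Finset.range (t+1)).filter fun s => P (h s)).card := by
    intro P _ t htm
    apply Finset.card_bij (fun o ho => o.val)
    · intro o ho
      simp only [Finset.mem_filter, Finset.mem_range] at ho ⊢
      exact ⟨by omega, ho.1.2⟩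
    · intro o1 h1 o2 h2 he
      exact Fin.val_injective he
    · intro s hs
      simp only [Finset.mem_filter, Finset.mem_range] at hs
      have hsm : s < m := by omega
      exact ⟨⟨s, hsm⟩, by simp only [Finset.mem_filter, Finset.mem_univ]; exact
        ⟨⟨trivial, hs.2⟩, by omega⟩, rfl⟩
  refine ⟨A, ?_, ?_, ?_⟩
  · -- unique ownership
    intro o
    refine ⟨h o.val, by simp [hA_def], ?_⟩
    intro i hi
    simp only [hA_def, Finset.mem_filter] at hi
    exact hi.2.symm
  · -- EF1
    intro i j
    by_cases hempty : A j = ∅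
    · exact Or.inl hempty
    right
    have hne : (A j).Nonempty := Finset.nonempty_iff_ne_empty.mpr hempty
    set o' := (A j).min' hne with ho'_def
    refine ⟨o', (A j).min'_mem hne, ?_⟩
    have := dominance (v i) (hv i) (hvord i) 1 1 ((A j).erase o') (A i) ?_
    · simpa using this
    intro t htm
    simp only [one_mul]
    have hAi : ((A i).filter fun o => o.val ≤ t).card
        = (t+1) / n + (if ((σ.symm i : Fin n) : ℕ) < (t+1) % n then 1 else 0) := by
      rw [hA_def]
      rw [bridge (fun a => a = i) t htm, cnt_formula]
    have hAj : ((A j).filter fun o => o.val ≤ t).card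
        = (t+1) / n + (if ((σ.symm j : Fin n) : ℕ) < (t+1) % n then 1 else 0) := by
      rw [hA_def]
      rw [bridge (fun a => a = j) t htm, cnt_formula]
    rw [Finset.filter_erase]
    by_cases hot : o'.val ≤ t
    · have homem : o' ∈ (A j).filter fun o => o.val ≤ t := by
        simp only [Finset.mem_filter]
        exact ⟨(A j).min'_mem hne, hot⟩
      rw [Finset.card_erase_of_mem homem, hAj, hAi]
      generalize (t+1)/n = Q2
      split_ifs <;> omega
    · have : (A j).filter (fun o => o.val ≤ t) = ∅ := by
        apply Finset.filter_eq_empty_iff.mpr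
        intro o ho
        have := (A j).min'_le o ho
        have : o'.val ≤ o.val := this
        omega
      rw [this]
      simp
  · -- CGEQ1
    intro p q
    have hU : ∀ p' : Fin k, (Finset.univ.filter fun j => G j = p').biUnion A
        = Finset.univ.filter fun o : Fin m => G (h o.val) = p' := by
      intro p'
      ext o
      simp only [Finset.mem_biUnion, Finset.mem_filter, Finset.mem_univ, true_and,
        hA_def]
      constructor
      · rintro ⟨j, hj, hoj⟩
        rw [hoj]
        exact hj
      · intro hG'
        exact ⟨h o.val, hG', rfl⟩
    by_cases hempty : (Finset.univ.filter fun j => G j = q).biUnion A = ∅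
    · exact Or.inl hempty
    right
    set Uq := (Finset.univ.filter fun j => G j = q).biUnion A with hUq_def
    set Up := (Finset.univ.filter fun j => G j = p).biUnion A with hUp_def
    have hne : Uq.Nonempty := Finset.nonempty_iff_ne_empty.mpr hempty
    set o' := Uq.min' hne with ho'_def
    refine ⟨o', Uq.min'_mem hne, ?_⟩
    have hcq : (0:ℝ) < ((Finset.univ.filter fun j => G j = q).card : ℝ) := by
      exact_mod_cast hc q
    have hcp : (0:ℝ) < ((Finset.univ.filter fun j => G j = p).card : ℝ) := by
      exact_mod_cast hc p
    rw [div_le_div_iff₀ hcq hcp]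
    have hdom := dominance u hu huord (c p) (c q) (Uq.erase o') Up ?_
    · calc (Uq.erase o').sum u * ((Finset.univ.filter fun j => G j = p).card : ℝ)
          = (c p : ℝ) * (Uq.erase o').sum u := by rw [mul_comm]
        _ ≤ (c q : ℝ) * Up.sum u := hdom
        _ = Up.sum u * ((Finset.univ.filter fun j => G j = q).card : ℝ) := by
            rw [mul_comm]
    intro t htm
    have hUqc : (Uq.filter fun o => o.val ≤ t).card
        = (t+1) / n * c q + Spart q ((t+1) % n) := by
      rw [hUq_def, hU q]
      rw [bridge (fun a => G a = q) t htm, gcnt_formula]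
    have hUpc : (Up.filter fun o => o.val ≤ t).card
        = (t+1) / n * c p + Spart p ((t+1) % n) := by
      rw [hUp_def, hU p]
      rw [bridge (fun a => G a = p) t htm, gcnt_formula]
    rw [Finset.filter_erase]
    by_cases hot : o'.val ≤ t
    · have homem : o' ∈ Uq.filter fun o => o.val ≤ t := by
        simp only [Finset.mem_filter]
        exact ⟨Uq.min'_mem hne, hot⟩
      rw [Finset.card_erase_of_mem homem, hUqc, hUpc]
      have hki := key_ineq ((t+1) % n) (Nat.mod_lt _ hn) p q
      have hQ : 1 ≤ (t+1) / n * c q + Spart q ((t+1) % n) := by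
        have hpos : 0 < (Uq.filter fun o => o.val ≤ t).card :=
          Finset.card_pos.mpr ⟨o', homem⟩
        rw [hUqc] at hpos
        exact hpos
      set sq := Spart q ((t+1) % n) with hsq_def
      set sp := Spart p ((t+1) % n) with hsp_def
      set Q := (t+1) / n with hQdef
      set X := Q * c q + sq with hX_def
      set Y := Q * c p + sp with hY_def
      have main : c p * X ≤ c q * Y + c p := by
        rw [hX_def, hY_def]
        have e1 : c p * (Q * c q + sq) = Q * c p * c q + c p * sq := by ring
        have e2 : c q * (Q * c p + sp) + c p = Q * c p * c q + (c q * sp + c p) := by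
          ring
        rw [e1, e2]
        exact Nat.add_le_add_left hki _
      have expand : c p * (X - 1) + c p = c p * X := by
        have e : (X - 1) + 1 = X := by omega
        calc c p * (X - 1) + c p = c p * ((X - 1) + 1) := by rw [Nat.mul_succ]
          _ = c p * X := by rw [e]
      have final : c p * (X - 1) + c p ≤ c q * Y + c p := by
        rw [expand]; exact main
      exact Nat.le_of_add_le_add_right final
    · have hfe : Uq.filter (fun o => o.val ≤ t) = ∅ := by
        apply Finset.filter_eq_empty_iff.mpr
        intro o ho
        have h1 := Uq.min'_le o ho
        have : o'.val ≤ o.val := h1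
        omega
      rw [hfe]
      simp
end

section
/- Suppose the allocator's valuation u is binary (u(o) ∈ {0,1}). Consider allocating the value-1 items one per step, each step giving an item to the group p* minimizing t_p/|G_p| (with t_p the count of value-1 items group p has received, and with the usual zero-priority/tie-breaking rules). Then at every step of the process, the partial allocation is CGEQ1: for all groups p, q with counts c_p, c_q, c_p·|G_q| ≥ (c_q − 1)·|G_p|. -/
/-- CGEQ1 invariant of the binary-allocator algorithm: value-1 items are handed out one per
step, each going to a group minimizing `c_p / g_p` (counters `c`), groups with zero counter
having priority by index.  Then after any number of steps `s ≤ N`, for all groups `p, q`: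
`c_p * g_q ≥ (c_q − 1) * g_p`, i.e. the partial allocation is CGEQ1. -/
theorem binary_allocator_CGEQ1_invariant
    (k N : ℕ) (g : Fin k → ℕ) (hg : ∀ p, 0 < g p)
    (sel : ℕ → Fin k) (c : ℕ → Fin k → ℕ)
    (hc : ∀ s p, c s p = ((Finset.range s).filter (fun s' => sel s' = p)).card)
    (hzero : ∀ s < N, (∃ p, c s p = 0) →
      c s (sel s) = 0 ∧ ∀ p, c s p = 0 → sel s ≤ p)
    (hmin : ∀ s < N, (∀ p, c s p ≠ 0) →
      ∀ q, c s (sel s) * g q ≤ c s q * g (sel s)) :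
    ∀ s ≤ N, ∀ p q : Fin k, ((c s q : ℤ) - 1) * (g p : ℤ) ≤ (c s p : ℤ) * (g q : ℤ) := by
  have hstep : ∀ s p, c (s + 1) p = c s p + if sel s = p then 1 else 0 := by
    intro s p
    rw [hc, hc, Finset.range_add_one, Finset.filter_insert]
    by_cases h : sel s = p
    · simp [h, Finset.card_insert_of_notMem]
    · simp [h]
  intro s
  induction s with
  | zero =>
    intro _ p q
    have : c 0 q = 0 := by rw [hc]; simp
    rw [this]
    push_cast
    nlinarith [Int.natCast_nonneg (g p), mul_nonneg (Int.natCast_nonneg (c 0 p)) (Int.natCast_nonneg (g q))]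
  | succ s ih =>
    intro hs p q
    have hsN : s < N := hs
    have IH := ih hsN.le
    rw [hstep, hstep]
    set r := sel s with hr
    by_cases hq : r = q
    · -- c (s+1) q = c s q + 1
      subst hq
      simp only [if_pos rfl]
      push_cast
      have key : (c s r : ℤ) * g p ≤ c s p * g r := by
        by_cases hp : r = p
        · subst hp; rfl
        · by_cases hz : ∃ p', c s p' = 0
          · have := (hzero s hsN hz).1
            simp [this]
            simp only [hr, this, Nat.cast_zero, zero_mul]
            positivity
          · push_neg at hz
            have := hmin s hsN hz p
            rw [← hr] at this
            exact_mod_cast this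
      by_cases hp : r = p
      · subst hp
        simp only [if_pos rfl]
        push_cast
        nlinarith [(hg r).le, Int.ofNat_le.mpr (hg r)]
      · rw [if_neg hp]
        push_cast
        linarith
    · rw [if_neg hq]
      have h2 : (0:ℤ) ≤ (if r = p then 1 else 0) * g q := by positivity
      have := IH p q
      push_cast
      nlinarith
end

section
/- Consider n agents, a phase-1 sequence of n·k_1 items allocated by round-robin in order of agents 1, 2, ..., n (each agent picking their most-valued remaining phase-1 item on their turn), followed by a phase-2 sequence of n·k_2 items allocated by round-robin in the reversed order n, n−1, ..., 1 (each agent picking their most-valued remaining phase-2 item). Then the resulting allocation is EF1: for every pair of agents i < j, v_i(A_i) ≥ v_i(A_j) − v_i(o_{j,k_1+1}) and v_j(A_j) ≥ v_j(A_i) − v_j(o_{i,1}), where o_{j,k_1+1} is j's first phase-2 item and o_{i,1} is i's first phase-1 item. -/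
lemma sum_filter_mod (n k : ℕ) (hn : 0 < n) (hk : 0 < k) (a : ℕ) (ha : a < n) (f : Fin (n*k) → ℝ) :
    ∑ t ∈ Finset.univ.filter (fun t : Fin (n*k) => (t : ℕ) % n = a), f t
      = ∑ r ∈ Finset.range k, (if h : r * n + a < n * k then f ⟨r * n + a, h⟩ else 0) := by
  have hnk : 0 < n * k := Nat.mul_pos hn hk
  have key : ∀ r < k, r * n + a < n * k := fun r hr => by
    calc r * n + a < (r+1) * n := by nlinarith
    _ ≤ k * n := Nat.mul_le_mul_right n hr
    _ = n * k := Nat.mul_comm k n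
  refine Finset.sum_nbij' (i := fun (t : Fin (n*k)) => (t : ℕ) / n)
    (j := fun r => if h : r * n + a < n * k then (⟨r * n + a, h⟩ : Fin (n*k)) else ⟨0, hnk⟩)
    ?_ ?_ ?_ ?_ ?_
  · intro t ht
    simp only [Finset.mem_filter, Finset.mem_univ, true_and] at ht
    simp only [Finset.mem_range]
    exact Nat.div_lt_of_lt_mul (by omega)
  · intro r hr
    simp only [Finset.mem_range] at hr
    have h := key r hr
    simp only [h, dif_pos, Finset.mem_filter, Finset.mem_univ, true_and]
    rw [Nat.mul_comm r n, Nat.mul_add_mod, Nat.mod_eq_of_lt ha]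
  · intro t ht
    simp only [Finset.mem_filter, Finset.mem_univ, true_and] at ht
    have hd := Nat.div_add_mod (t : ℕ) n
    rw [ht] at hd
    have hc : (t : ℕ) / n * n = n * ((t : ℕ) / n) := Nat.mul_comm _ _
    have h : (t : ℕ) / n * n + a < n * k := by omega
    simp only [h, dif_pos]
    refine Fin.ext ?_; simp only [Fin.val_mk]; omega
  · intro r hr
    simp only [Finset.mem_range] at hr
    have h := key r hr
    simp only [h, dif_pos]
    rw [Nat.mul_comm r n, Nat.mul_add_div hn, Nat.div_eq_of_lt ha, Nat.add_zero]
  · intro t ht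
    simp only [Finset.mem_filter, Finset.mem_univ, true_and] at ht
    have hd := Nat.div_add_mod (t : ℕ) n
    rw [ht] at hd
    have hc : (t : ℕ) / n * n = n * ((t : ℕ) / n) := Nat.mul_comm _ _
    have h : (t : ℕ) / n * n + a < n * k := by omega
    simp only [h, dif_pos]
    congr 1
    refine Fin.ext ?_; simp only [Fin.val_mk]; omega

lemma pick_dominates1 {n k : ℕ} (hn : 0 < n) {ι : Type*} (v : Fin n → ι → ℝ)
    (pick : Fin (n*k) → ι)
    (hg : ∀ t t' : Fin (n*k), t ≤ t' →
      v ⟨(t : ℕ) % n, Nat.mod_lt _ hn⟩ (pick t') ≤ v ⟨(t : ℕ) % n, Nat.mod_lt _ hn⟩ (pick t))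
    {a b : ℕ} (ha : a < n) {r s : ℕ} (h1 : r*n+a < n*k) (h2 : s*n+b < n*k)
    (hle : r*n+a ≤ s*n+b) :
    v ⟨a, ha⟩ (pick ⟨s*n+b, h2⟩) ≤ v ⟨a, ha⟩ (pick ⟨r*n+a, h1⟩) := by
  have H := hg ⟨r*n+a, h1⟩ ⟨s*n+b, h2⟩ hle
  have hmod : (r*n+a) % n = a := by
    rw [Nat.mul_comm r n, Nat.mul_add_mod, Nat.mod_eq_of_lt ha]
  have he : (⟨(↑(⟨r*n+a, h1⟩ : Fin (n*k))) % n, Nat.mod_lt _ hn⟩ : Fin n) = ⟨a, ha⟩ :=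
    Fin.ext (by simpa using hmod)
  rwa [he] at H

lemma pick_dominates2 {n k : ℕ} (hn : 0 < n) {ι : Type*} (v : Fin n → ι → ℝ)
    (pick : Fin (n*k) → ι)
    (hg : ∀ t t' : Fin (n*k), t ≤ t' →
      v ⟨n - 1 - (t : ℕ) % n, by omega⟩ (pick t') ≤ v ⟨n - 1 - (t : ℕ) % n, by omega⟩ (pick t))
    {a b : ℕ} (ha : a < n) {r s : ℕ} (h1 : r*n+(n-1-a) < n*k) (h2 : s*n+(n-1-b) < n*k)
    (hle : r*n+(n-1-a) ≤ s*n+(n-1-b)) :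
    v ⟨a, ha⟩ (pick ⟨s*n+(n-1-b), h2⟩) ≤ v ⟨a, ha⟩ (pick ⟨r*n+(n-1-a), h1⟩) := by
  have H := hg ⟨r*n+(n-1-a), h1⟩ ⟨s*n+(n-1-b), h2⟩ hle
  have hmod : (r*n+(n-1-a)) % n = n-1-a := by
    rw [Nat.mul_comm r n, Nat.mul_add_mod, Nat.mod_eq_of_lt (by omega)]
  have he : (⟨n - 1 - (↑(⟨r*n+(n-1-a), h1⟩ : Fin (n*k))) % n, by omega⟩ : Fin n) = ⟨a, ha⟩ :=
    Fin.ext (by simp only [Fin.val_mk]; omega)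
  rwa [he] at H

lemma shift_sum (k : ℕ) (hk : 0 < k) (f g : ℕ → ℝ) (hg0 : ∀ r, 0 ≤ g r)
    (hfg : ∀ r, r + 1 < k → f (r+1) ≤ g r) :
    (∑ r ∈ Finset.range k, f r) - f 0 ≤ ∑ r ∈ Finset.range k, g r := by
  obtain ⟨m, rfl⟩ : ∃ m, k = m + 1 := ⟨k-1, by omega⟩
  rw [Finset.sum_range_succ' f]
  have h1 : ∑ r ∈ Finset.range m, f (r+1) ≤ ∑ r ∈ Finset.range m, g r :=
    Finset.sum_le_sum fun r hr => hfg r (by simp only [Finset.mem_range] at hr; omega)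
  have h2 : ∑ r ∈ Finset.range m, g r ≤ ∑ r ∈ Finset.range (m+1), g r := by
    rw [Finset.sum_range_succ]; linarith [hg0 m]
  linarith

/-- EF1 of the dual-flow (forward then reverse round-robin) picking procedure.
Phase 1: `n * k1` items `ι₁` are picked in turn order `0, 1, …, n−1` repeated `k1` times
(agent of pick `t` is `t % n`), each agent taking their most-valued remaining phase-1 item
(`hg1`: a pick is worth at least, to its picker, any later pick).  Phase 2: `n * k2` items `ι₂`
are picked in the reversed turn order `n−1, …, 0` repeated `k2` times (agent of pick `t` is
`n − 1 − t % n`), analogously (`hg2`).  Then for every pair `i < j`: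
`v_i(A_i) ≥ v_i(A_j) − v_i(o_{j,k1+1})` and `v_j(A_j) ≥ v_j(A_i) − v_j(o_{i,1})`, where
`o_{j,k1+1}` is `j`'s first phase-2 item (pick `n − 1 − j`) and `o_{i,1}` is `i`'s first
phase-1 item (pick `i`). -/
theorem dual_flow_picking_EF1
    (n k1 k2 : ℕ) (hn : 0 < n) (hk1 : 0 < k1) (hk2 : 0 < k2)
    {ι₁ ι₂ : Type*} [Fintype ι₁] [Fintype ι₂]
    (v1 : Fin n → ι₁ → ℝ) (v2 : Fin n → ι₂ → ℝ)
    (hv1 : ∀ i o, 0 ≤ v1 i o) (hv2 : ∀ i o, 0 ≤ v2 i o)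
    (pick1 : Fin (n * k1) → ι₁) (hp1 : Function.Bijective pick1)
    (pick2 : Fin (n * k2) → ι₂) (hp2 : Function.Bijective pick2)
    (hg1 : ∀ t t' : Fin (n * k1), t ≤ t' →
      v1 ⟨(t : ℕ) % n, Nat.mod_lt _ hn⟩ (pick1 t') ≤
        v1 ⟨(t : ℕ) % n, Nat.mod_lt _ hn⟩ (pick1 t))
    (hg2 : ∀ t t' : Fin (n * k2), t ≤ t' →
      v2 ⟨n - 1 - (t : ℕ) % n, by omega⟩ (pick2 t') ≤
        v2 ⟨n - 1 - (t : ℕ) % n, by omega⟩ (pick2 t)) :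
    ∀ i j : Fin n, i < j →
      (((∑ t ∈ Finset.univ.filter (fun t : Fin (n * k1) => (t : ℕ) % n = (j : ℕ)),
            v1 i (pick1 t)) +
          (∑ t ∈ Finset.univ.filter (fun t : Fin (n * k2) => n - 1 - (t : ℕ) % n = (j : ℕ)),
            v2 i (pick2 t))) -
          v2 i (pick2 ⟨n - 1 - (j : ℕ),
            by have := Nat.le_mul_of_pos_right n hk2; omega⟩) ≤
        ((∑ t ∈ Finset.univ.filter (fun t : Fin (n * k1) => (t : ℕ) % n = (i : ℕ)),
            v1 i (pick1 t)) +
          (∑ t ∈ Finset.univ.filter (fun t : Fin (n * k2) => n - 1 - (t : ℕ) % n = (i : ℕ)),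
            v2 i (pick2 t)))) ∧
      (((∑ t ∈ Finset.univ.filter (fun t : Fin (n * k1) => (t : ℕ) % n = (i : ℕ)),
            v1 j (pick1 t)) +
          (∑ t ∈ Finset.univ.filter (fun t : Fin (n * k2) => n - 1 - (t : ℕ) % n = (i : ℕ)),
            v2 j (pick2 t))) -
          v1 j (pick1 ⟨(i : ℕ),
            by have := Nat.le_mul_of_pos_right n hk1; omega⟩) ≤
        ((∑ t ∈ Finset.univ.filter (fun t : Fin (n * k1) => (t : ℕ) % n = (j : ℕ)),
            v1 j (pick1 t)) +
          (∑ t ∈ Finset.univ.filter (fun t : Fin (n * k2) => n - 1 - (t : ℕ) % n = (j : ℕ)),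
            v2 j (pick2 t)))) := by
  intro i j hij
  have hi : (i : ℕ) < n := i.isLt
  have hj : (j : ℕ) < n := j.isLt
  have hij' : (i : ℕ) < (j : ℕ) := hij
  -- rewrite phase-2 filters into mod form
  have hfilt : ∀ (k : ℕ) (a : Fin n),
      Finset.univ.filter (fun t : Fin (n*k) => n - 1 - (t : ℕ) % n = (a : ℕ))
        = Finset.univ.filter (fun t : Fin (n*k) => (t : ℕ) % n = n - 1 - (a : ℕ)) := by
    intro k a
    ext t
    have h1 : (t : ℕ) % n < n := Nat.mod_lt _ hn
    have h2 : (a : ℕ) < n := a.isLt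
    simp only [Finset.mem_filter, Finset.mem_univ, true_and]
    omega
  have slot1 : ∀ (r a : ℕ), r < k1 → a < n → r * n + a < n * k1 := by
    intro r a hr ha
    calc r * n + a < (r+1) * n := by nlinarith
    _ ≤ k1 * n := Nat.mul_le_mul_right n hr
    _ = n * k1 := Nat.mul_comm k1 n
  have slot2 : ∀ (r a : ℕ), r < k2 → a < n → r * n + a < n * k2 := by
    intro r a hr ha
    calc r * n + a < (r+1) * n := by nlinarith
    _ ≤ k2 * n := Nat.mul_le_mul_right n hr
    _ = n * k2 := Nat.mul_comm k2 n
  rw [hfilt, hfilt,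
    sum_filter_mod n k1 hn hk1 (j : ℕ) hj (fun t => v1 i (pick1 t)),
    sum_filter_mod n k1 hn hk1 (i : ℕ) hi (fun t => v1 i (pick1 t)),
    sum_filter_mod n k1 hn hk1 (i : ℕ) hi (fun t => v1 j (pick1 t)),
    sum_filter_mod n k1 hn hk1 (j : ℕ) hj (fun t => v1 j (pick1 t)),
    sum_filter_mod n k2 hn hk2 (n - 1 - (j : ℕ)) (by omega) (fun t => v2 i (pick2 t)),
    sum_filter_mod n k2 hn hk2 (n - 1 - (i : ℕ)) (by omega) (fun t => v2 i (pick2 t)),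
    sum_filter_mod n k2 hn hk2 (n - 1 - (i : ℕ)) (by omega) (fun t => v2 j (pick2 t)),
    sum_filter_mod n k2 hn hk2 (n - 1 - (j : ℕ)) (by omega) (fun t => v2 j (pick2 t))]
  constructor
  · -- i does not envy j up to one item
    have A : (∑ r ∈ Finset.range k1,
          if h : r * n + (j : ℕ) < n * k1 then v1 i (pick1 ⟨r * n + (j : ℕ), h⟩) else 0)
        ≤ ∑ r ∈ Finset.range k1,
          if h : r * n + (i : ℕ) < n * k1 then v1 i (pick1 ⟨r * n + (i : ℕ), h⟩) else 0 := by
      refine Finset.sum_le_sum fun r hr => ?_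
      simp only [Finset.mem_range] at hr
      have h1 : r * n + (i : ℕ) < n * k1 := slot1 r _ hr hi
      have h2 : r * n + (j : ℕ) < n * k1 := slot1 r _ hr hj
      simp only [h1, h2, dif_pos]
      exact pick_dominates1 hn v1 pick1 hg1 hi h1 h2 (by omega)
    have B : (∑ r ∈ Finset.range k2,
          if h : r * n + (n - 1 - (j : ℕ)) < n * k2 then
            v2 i (pick2 ⟨r * n + (n - 1 - (j : ℕ)), h⟩) else 0)
          - (if h : 0 * n + (n - 1 - (j : ℕ)) < n * k2 then
            v2 i (pick2 ⟨0 * n + (n - 1 - (j : ℕ)), h⟩) else 0)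
        ≤ ∑ r ∈ Finset.range k2,
          if h : r * n + (n - 1 - (i : ℕ)) < n * k2 then
            v2 i (pick2 ⟨r * n + (n - 1 - (i : ℕ)), h⟩) else 0 := by
      refine shift_sum k2 hk2 _ _ (fun r => ?_) (fun r hr => ?_)
      · split
        · exact hv2 _ _
        · exact le_refl 0
      · have h1 : r * n + (n - 1 - (i : ℕ)) < n * k2 := slot2 r _ (by omega) (by omega)
        have h2 : (r+1) * n + (n - 1 - (j : ℕ)) < n * k2 := slot2 (r+1) _ hr (by omega)
        simp only [h1, h2, dif_pos]
        refine pick_dominates2 hn v2 pick2 hg2 hi h1 h2 ?_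
        have : (r+1) * n = r * n + n := by ring
        omega
    have hX : v2 i (pick2 ⟨n - 1 - (j : ℕ),
          by have := Nat.le_mul_of_pos_right n hk2; omega⟩)
        = (if h : 0 * n + (n - 1 - (j : ℕ)) < n * k2 then
            v2 i (pick2 ⟨0 * n + (n - 1 - (j : ℕ)), h⟩) else 0) := by
      have h : 0 * n + (n - 1 - (j : ℕ)) < n * k2 := slot2 0 _ hk2 (by omega)
      simp only [h, dif_pos, Nat.zero_mul, Nat.zero_add]
      rw [dif_pos (by omega)]
    rw [hX]
    linarith
  · -- j does not envy i up to one item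
    have A : (∑ r ∈ Finset.range k2,
          if h : r * n + (n - 1 - (i : ℕ)) < n * k2 then
            v2 j (pick2 ⟨r * n + (n - 1 - (i : ℕ)), h⟩) else 0)
        ≤ ∑ r ∈ Finset.range k2,
          if h : r * n + (n - 1 - (j : ℕ)) < n * k2 then
            v2 j (pick2 ⟨r * n + (n - 1 - (j : ℕ)), h⟩) else 0 := by
      refine Finset.sum_le_sum fun r hr => ?_
      simp only [Finset.mem_range] at hr
      have h1 : r * n + (n - 1 - (j : ℕ)) < n * k2 := slot2 r _ hr (by omega)
      have h2 : r * n + (n - 1 - (i : ℕ)) < n * k2 := slot2 r _ hr (by omega)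
      simp only [h1, h2, dif_pos]
      exact pick_dominates2 hn v2 pick2 hg2 hj h1 h2 (by omega)
    have B : (∑ r ∈ Finset.range k1,
          if h : r * n + (i : ℕ) < n * k1 then v1 j (pick1 ⟨r * n + (i : ℕ), h⟩) else 0)
          - (if h : 0 * n + (i : ℕ) < n * k1 then v1 j (pick1 ⟨0 * n + (i : ℕ), h⟩) else 0)
        ≤ ∑ r ∈ Finset.range k1,
          if h : r * n + (j : ℕ) < n * k1 then v1 j (pick1 ⟨r * n + (j : ℕ), h⟩) else 0 := by
      refine shift_sum k1 hk1 _ _ (fun r => ?_) (fun r hr => ?_)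
      · split
        · exact hv1 _ _
        · exact le_refl 0
      · have h1 : r * n + (j : ℕ) < n * k1 := slot1 r _ (by omega) hj
        have h2 : (r+1) * n + (i : ℕ) < n * k1 := slot1 (r+1) _ hr hi
        simp only [h1, h2, dif_pos]
        refine pick_dominates1 hn v1 pick1 hg1 hj h1 h2 ?_
        have : (r+1) * n = r * n + n := by ring
        omega
    have hY : v1 j (pick1 ⟨(i : ℕ),
          by have := Nat.le_mul_of_pos_right n hk1; omega⟩)
        = (if h : 0 * n + (i : ℕ) < n * k1 then v1 j (pick1 ⟨0 * n + (i : ℕ), h⟩) else 0) := by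
      have h : 0 * n + (i : ℕ) < n * k1 := slot1 0 _ hk1 hi
      simp only [h, dif_pos, Nat.zero_mul, Nat.zero_add]
      rw [dif_pos (by omega)]
    rw [hY]
    linarith
end

section
/- Let u be a binary valuation (u(o) ∈ {0,1}) with |O^1| items of value 1, and let groups G_1,...,G_k have sizes summing to n. Then CGMMS = max over ways to distribute the |O^1| unit items as nonnegative integer counts (c_1,...,c_k) with Σc_p = |O^1| of min_p c_p/|G_p|; in particular CGMMS depends only on |O^1| and the group sizes, and is achieved by integer counts, so it can be computed by checking polynomially many candidate values c/|G_p|. -/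
open Finset

private def sigmaFstFiber {k : ℕ} (β : Fin k → Type*) (p : Fin k) :
    {y : Σ q, β q // y.1 = p} ≃ β p where
  toFun y := y.2 ▸ y.1.2
  invFun b := ⟨⟨p, b⟩, rfl⟩
  left_inv := by rintro ⟨⟨q, b⟩, rfl⟩; rfl
  right_inv b := rfl

/-- For a binary allocator valuation `u` (each item worth `0` or `1`), the set of values
`min_p u(group p's items) / |G_p|` achievable by allocations of the items to the `n` agents
coincides with the set of values `min_p c_p / |G_p|` over nonnegative integer counts
`(c_1, …, c_k)` summing to the number of value-1 items.  Hence the CGMMS value depends only on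
`|O¹|` and the group sizes and is achieved by integer counts. -/
theorem binary_cgmms_reduces_to_counts
    {O : Type*} [Fintype O] [DecidableEq O]
    (n k : ℕ) (hn : 0 < n) (hk : 0 < k)
    (G : Fin n → Fin k) (hG : ∀ p, ∃ i, G i = p)
    (u : O → ℕ) (hu : ∀ o, u o = 0 ∨ u o = 1) :
    {x : ℝ | ∃ A : O → Fin n,
        x = Finset.univ.inf' (Finset.univ_nonempty_iff.mpr (Fin.pos_iff_nonempty.mp hk))
          (fun p => ((∑ o ∈ Finset.univ.filter (fun o => G (A o) = p), u o : ℕ) : ℝ) /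
            ((Finset.univ.filter fun i => G i = p).card : ℝ))} =
      {x : ℝ | ∃ c : Fin k → ℕ,
        (∑ p, c p) = (Finset.univ.filter fun o => u o = 1).card ∧
        x = Finset.univ.inf' (Finset.univ_nonempty_iff.mpr (Fin.pos_iff_nonempty.mp hk))
          (fun p => (c p : ℝ) / ((Finset.univ.filter fun i => G i = p).card : ℝ))} := by
  have key : ∀ (B : O → Fin k) (p : Fin k),
      ∑ o ∈ Finset.univ.filter (fun o => B o = p), u o
        = (Finset.univ.filter (fun o => B o = p ∧ u o = 1)).card := by
    intro B p
    rw [Finset.card_filter, Finset.sum_filter]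
    refine Finset.sum_congr rfl fun o _ => ?_
    rcases hu o with h | h <;> simp [h]
  ext x
  simp only [Set.mem_setOf_eq]
  constructor
  · rintro ⟨A, rfl⟩
    refine ⟨fun p => ∑ o ∈ Finset.univ.filter (fun o => G (A o) = p), u o, ?_, rfl⟩
    rw [Finset.sum_fiberwise Finset.univ (fun o => G (A o)) u, Finset.card_filter]
    exact Finset.sum_congr rfl fun o _ => by rcases hu o with h | h <;> simp [h]
  · rintro ⟨c, hc, rfl⟩
    choose g hg using hG
    have hcard : Fintype.card {o // u o = 1} = Fintype.card (Σ p, Fin (c p)) := by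
      simp [Fintype.card_subtype, hc]
    let e := Fintype.equivOfCardEq hcard
    refine ⟨fun o => if h : u o = 1 then g (e ⟨o, h⟩).1 else ⟨0, hn⟩, ?_⟩
    have hsum : ∀ p, ∑ o ∈ Finset.univ.filter
        (fun o => G (if h : u o = 1 then g (e ⟨o, h⟩).1 else ⟨0, hn⟩) = p), u o = c p := by
      intro p
      rw [key]
      have E1 : {o // G (if h : u o = 1 then g (e ⟨o, h⟩).1 else ⟨0, hn⟩) = p ∧ u o = 1}
          ≃ {y : Σ q, Fin (c q) // y.1 = p} :=
        { toFun := fun o => ⟨e ⟨o.1, o.2.2⟩, by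
            have h2 := o.2.2
            have h1 := o.2.1
            rw [dif_pos h2] at h1
            rwa [hg] at h1⟩
          invFun := fun y => ⟨(e.symm y.1).1, by
            refine ⟨?_, (e.symm y.1).2⟩
            rw [dif_pos (e.symm y.1).2, hg]
            have h3 : (⟨(e.symm y.1).1, (e.symm y.1).2⟩ : {o // u o = 1}) = e.symm y.1 := rfl
            rw [h3, e.apply_symm_apply]
            exact y.2⟩
          left_inv := fun o => Subtype.ext (by simp)
          right_inv := fun y => Subtype.ext (by
            simp only
            have h3 : (⟨(e.symm y.1).1, (e.symm y.1).2⟩ : {o // u o = 1}) = e.symm y.1 := rfl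
            rw [h3, e.apply_symm_apply]) }
      rw [← Fintype.card_subtype, Fintype.card_congr (E1.trans (sigmaFstFiber _ p)),
        Fintype.card_fin]
    simp only [hsum]
end
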